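/- arXiv:1907.00675 — 2 statements merged into one kernel-verified Lean document; each statement's English description precedes it below -/
import Mathlib

section
/- For every complex number z, |z| ≤ ψ(z) ≤ √5·|z|, where ψ(z) = max over γ ∈ {-2, 2i, -2i, 1+2i, 1-2i} of Re(γ·z). -/
open Complex

/-- ψ(z) = max_{γ ∈ Γ₀} Re(γ z), Γ₀ = {-2, 2i, -2i, 1+2i, 1-2i}. -/
noncomputable def psi (z : ℂ) : ℝ :=
  max (max (max ((-2 * z).re) ((2 * I * z).re))
           (max ((-2 * I * z).re) (((1 + 2 * I) * z).re)))
      (((1 - 2 * I) * z).re)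

/-!
Every `γ ∈ Γ₀` has `‖γ‖ ≤ √5`, which bounds each `Re(γ z)` by `√5 ‖z‖`. Conversely, in coordinates
`z = x + iy` the five linear forms are `-2x, -2y, 2y, x - 2y, x + 2y`; their maximum dominates
`|x| + |y| ≥ ‖z‖`: by `x + 2|y|` when `x ≥ 0`, and by the average of `-2x` and `2|y|` when `x < 0`.
-/

lemma re_mul_le_of_norm_le {γ : ℂ} {c : ℝ} (hγ : ‖γ‖ ≤ c) (z : ℂ) : (γ * z).re ≤ c * ‖z‖ :=
  calc (γ * z).re ≤ ‖γ * z‖ := re_le_norm _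
    _ = ‖γ‖ * ‖z‖ := norm_mul _ _
    _ ≤ c * ‖z‖ := by gcongr

lemma two_le_sqrt_five : (2 : ℝ) ≤ √5 :=
  Real.le_sqrt_of_sq_le (by norm_num)

lemma norm_one_add_two_mul_I : ‖1 + 2 * I‖ = √5 := by
  simpa using (norm_add_mul_I 1 2).trans (by norm_num)

lemma norm_one_sub_two_mul_I : ‖1 - 2 * I‖ = √5 := by
  rw [← norm_conj, map_sub, map_one, map_mul, conj_I, conj_ofNat, mul_neg, sub_neg_eq_add,
    norm_one_add_two_mul_I]

lemma psi_le_sqrt_five_mul_norm (z : ℂ) : psi z ≤ √5 * ‖z‖ := by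
  have h2 : ‖(2 : ℂ)‖ ≤ √5 := by simpa using two_le_sqrt_five
  simp only [psi, max_le_iff]
  refine ⟨⟨⟨re_mul_le_of_norm_le ?_ z, re_mul_le_of_norm_le ?_ z⟩,
    re_mul_le_of_norm_le ?_ z, re_mul_le_of_norm_le norm_one_add_two_mul_I.le z⟩,
    re_mul_le_of_norm_le norm_one_sub_two_mul_I.le z⟩ <;> simpa using h2

lemma linear_forms_le_psi (z : ℂ) :
    -2 * z.re ≤ psi z ∧ -2 * z.im ≤ psi z ∧ 2 * z.im ≤ psi z ∧
      z.re - 2 * z.im ≤ psi z ∧ z.re + 2 * z.im ≤ psi z := by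
  have h := le_refl (psi z)
  nth_rw 1 [psi] at h
  norm_num [max_le_iff, mul_re] at h
  obtain ⟨⟨⟨h₁, h₂⟩, h₃, h₄⟩, h₅⟩ := h
  refine ⟨?_, ?_, ?_, ?_, ?_⟩ <;> linarith

lemma abs_re_add_abs_im_le_psi (z : ℂ) : |z.re| + |z.im| ≤ psi z := by
  obtain ⟨h₁, h₂, h₃, h₄, h₅⟩ := linear_forms_le_psi z
  rcases abs_cases z.re with ⟨hx, -⟩ | ⟨hx, -⟩ <;>
    rcases abs_cases z.im with ⟨hy, -⟩ | ⟨hy, -⟩ <;> linarith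

theorem psi_comparable_to_abs (z : ℂ) :
    ‖z‖ ≤ psi z ∧ psi z ≤ Real.sqrt 5 * ‖z‖ :=
  ⟨(norm_le_abs_re_add_abs_im z).trans (abs_re_add_abs_im_le_psi z), psi_le_sqrt_five_mul_norm z⟩
end

section
/- A Gaussian integer ζ satisfies ζⁿ ∈ ℝ for some integer n ≥ 1 if and only if ζ is an integer multiple of one of 1, i, 1+i, or 1−i. -/
/-!
If `ζ ^ n` is real then `ζ ^ n = conj ζ ^ n` in the unique factorization domain `ℤ[i]`, so `ζ` and
`conj ζ` are associated. Every unit of `ℤ[i]` has fourth power `1`, hence already `ζ ^ 4` is real.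
For `ζ = a + b i` one has `Im (ζ ^ 4) = 4ab(a - b)(a + b)`, which vanishes exactly when `ζ` lies on
one of the two axes or the two diagonals.
-/

open Complex

theorem associated_of_pow_eq_pow {R : Type*} [CommMonoidWithZero R]
    [UniqueFactorizationMonoid R] {x y : R} {n : ℕ} (hn : n ≠ 0) (h : x ^ n = y ^ n) :
    Associated x y :=
  associated_of_dvd_dvd ((UniqueFactorizationMonoid.pow_dvd_pow_iff_dvd hn).1 h.dvd)
    ((UniqueFactorizationMonoid.pow_dvd_pow_iff_dvd hn).1 h.symm.dvd)

theorem Zsqrtd.star_eq_self_iff {d : ℤ} {z : ℤ√d} : star z = z ↔ z.im = 0 := by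
  simp only [Zsqrtd.ext_iff, Zsqrtd.re_star, Zsqrtd.im_star, true_and]
  omega

namespace GaussianInt

theorem im_pow_four (z : GaussianInt) :
    (z ^ 4).im = 4 * (z.re * z.im * (z.re - z.im) * (z.re + z.im)) := by
  simp only [pow_succ, pow_zero, one_mul, Zsqrtd.im_mul, Zsqrtd.re_mul]
  ring

theorem pow_four_eq_one_of_isUnit {u : GaussianInt} (hu : IsUnit u) : u ^ 4 = 1 := by
  have hnorm : u.re ^ 2 + u.im ^ 2 = 1 := by
    simpa [Zsqrtd.norm_def, sq] using (Zsqrtd.norm_eq_one_iff' (by norm_num) u).2 hu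
  have hmul : u.re * u.im = 0 := by
    by_contra h
    nlinarith [sq_pos_of_ne_zero h, sq_nonneg (u.re ^ 2 - u.im ^ 2)]
  ext <;> simp only [pow_succ, pow_zero, one_mul, Zsqrtd.im_mul, Zsqrtd.re_mul, Zsqrtd.re_one,
    Zsqrtd.im_one]
  · linear_combination (u.re ^ 2 + u.im ^ 2 + 1) * hnorm - 8 * u.re * u.im * hmul
  · linear_combination 4 * (u.re ^ 2 - u.im ^ 2) * hmul

theorem im_pow_four_eq_zero_of_im_pow_eq_zero {z : GaussianInt} {n : ℕ} (hn : n ≠ 0)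
    (h : (z ^ n).im = 0) : (z ^ 4).im = 0 := by
  have hconj : star z ^ n = z ^ n := by rw [← star_pow, Zsqrtd.star_eq_self_iff.2 h]
  obtain ⟨u, hu⟩ := associated_of_pow_eq_pow hn hconj
  have hu4 : (u : GaussianInt) ^ 4 = 1 := pow_four_eq_one_of_isUnit u.isUnit
  rw [← Zsqrtd.star_eq_self_iff, star_pow]
  calc star z ^ 4 = star z ^ 4 * (u : GaussianInt) ^ 4 := by rw [hu4, mul_one]
    _ = z ^ 4 := by rw [← mul_pow, hu]

end GaussianInt

theorem exists_int_mul_eq_add_mul_I_iff (a b : ℤ) :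
    (∃ k : ℤ, (a + b * I : ℂ) = k ∨ (a + b * I : ℂ) = k * I ∨ (a + b * I : ℂ) = k * (1 + I) ∨
      (a + b * I : ℂ) = k * (1 - I)) ↔ a * b * (a - b) * (a + b) = 0 := by
  simp only [Complex.ext_iff, add_re, intCast_re, mul_re, I_re, mul_zero, intCast_im, I_im,
    mul_one, sub_self, add_zero, Int.cast_inj, add_im, mul_im, zero_add, Int.cast_eq_zero, one_re,
    one_im, sub_zero, sub_re, sub_im, zero_sub, mul_neg, neg_zero, mul_eq_zero]
  norm_cast
  constructor
  · rintro ⟨k, h⟩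
    omega
  · rintro (((h | h) | h) | h)
    · exact ⟨b, by omega⟩
    · exact ⟨a, by omega⟩
    · exact ⟨a, by omega⟩
    · exact ⟨a, by omega⟩

/-- A Gaussian integer ζ satisfies ζⁿ ∈ ℝ for some n ≥ 1 iff ζ is an integer
multiple of 1, i, 1+i or 1−i. -/
theorem gaussian_power_real_iff (ζ : ℂ) (hζ : ∃ a b : ℤ, ζ = (a : ℂ) + (b : ℂ) * I) :
    (∃ n : ℕ, 1 ≤ n ∧ (ζ ^ n).im = 0) ↔
      ∃ k : ℤ, ζ = (k : ℂ) ∨ ζ = (k : ℂ) * I ∨ ζ = (k : ℂ) * (1 + I) ∨ ζ = (k : ℂ) * (1 - I) := by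
  obtain ⟨a, b, rfl⟩ := hζ
  set z : GaussianInt := ⟨a, b⟩
  have him (n : ℕ) : (((a : ℂ) + b * I) ^ n).im = ((z ^ n).im : ℝ) := by
    rw [GaussianInt.intCast_im, map_pow, GaussianInt.toComplex_def']
  calc (∃ n : ℕ, 1 ≤ n ∧ (((a : ℂ) + b * I) ^ n).im = 0) ↔ (z ^ 4).im = 0 := by
        simp only [him, Int.cast_eq_zero]
        exact ⟨fun ⟨n, hn, h⟩ ↦ GaussianInt.im_pow_four_eq_zero_of_im_pow_eq_zero (by omega) h,
          fun h ↦ ⟨4, by norm_num, h⟩⟩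
    _ ↔ a * b * (a - b) * (a + b) = 0 := by
        rw [GaussianInt.im_pow_four, mul_eq_zero, or_iff_right four_ne_zero]
    _ ↔ _ := (exists_int_mul_eq_add_mul_I_iff a b).symm
end
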